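/- arXiv:1304.6659 — 4 statements merged into one kernel-verified Lean document; each statement's English description precedes it below -/
import Mathlib

section
/- Let A be a d×n matrix with nonnegative integer entries and columns a_1,…,a_n. In the polynomial ring ℚ[t_1,…,t_d,x_1,…,x_n], let J be the ideal generated by the polynomials x_i − t^{a_i} for i = 1,…,n, where t^{a_i} = t_1^{A_{1i}} ⋯ t_d^{A_{di}}. Then the elimination ideal J ∩ ℚ[x_1,…,x_n] (the preimage of J under the inclusion ℚ[x_1,…,x_n] ↪ ℚ[t_1,…,t_d,x_1,…,x_n]) equals the toric ideal I_A. -/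
open MvPolynomial

/-- The monomial `x^u = ∏ i, x i ^ u i` in `ℚ[x_1,…,x_n]`. -/
noncomputable def monoP {n : ℕ} (u : Fin n → ℕ) : MvPolynomial (Fin n) ℚ :=
  ∏ i, X i ^ u i

/-- The ℚ-algebra homomorphism `φ_A : ℚ[x_1,…,x_n] → ℚ[t_1^{±1},…,t_d^{±1}]`
(the group algebra of `ℤ^d` over `ℚ`) sending `x_i` to `t^{a_i}`, where
`a_i` is the `i`-th column of the integer matrix `A`. -/
noncomputable def phi {d n : ℕ} (A : Matrix (Fin d) (Fin n) ℤ) :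
    MvPolynomial (Fin n) ℚ →ₐ[ℚ] AddMonoidAlgebra ℚ (Fin d → ℤ) :=
  MvPolynomial.aeval fun i => AddMonoidAlgebra.single (fun j => A j i) (1 : ℚ)

/-- The toric ideal `I_A ⊆ ℚ[x_1,…,x_n]`: the kernel of `φ_A`. -/
noncomputable def toricIdeal {d n : ℕ} (A : Matrix (Fin d) (Fin n) ℤ) :
    Ideal (MvPolynomial (Fin n) ℚ) :=
  RingHom.ker (phi A)

/-! Write `σ_A : ℚ[x] → ℚ[t]` for the substitution `x_i ↦ t^{a_i}`. Modulo
`J = ⟨x_i - t^{a_i}⟩` every polynomial in `x` is congruent to its image under `σ_A`, and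
`J` is killed by the retraction `ℚ[t, x] → ℚ[t]`, `x_i ↦ t^{a_i}`, which extends `σ_A`;
so `J ∩ ℚ[x] = ker σ_A`. This holds for any substitution, over any commutative ring.
Since `A ≥ 0`, `φ_A` factors as `σ_A` followed by the injective inclusion
`ℚ[t] ↪ ℚ[t^{±1}]`, hence `ker φ_A = ker σ_A`. -/

namespace MvPolynomial

section Graph

variable {R σ ι : Type*} [CommRing R] (f : ι → MvPolynomial σ R)

theorem rename_inr_sub_rename_inl_aeval_mem_span (p : MvPolynomial ι R) :
    rename Sum.inr p - rename Sum.inl (aeval f p) ∈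
      Ideal.span (Set.range fun i => X (Sum.inr i) - rename Sum.inl (f i)) := by
  set J := Ideal.span (Set.range fun i => X (Sum.inr i) - rename Sum.inl (f i))
  suffices (Ideal.Quotient.mkₐ R J).comp (rename Sum.inr) =
      ((Ideal.Quotient.mkₐ R J).comp (rename Sum.inl)).comp (aeval f) by
    rw [← Ideal.Quotient.mk_eq_mk_iff_sub_mem]
    exact AlgHom.congr_fun this p
  refine algHom_ext fun i => ?_
  have hi : X (Sum.inr i) - rename Sum.inl (f i) ∈ J := Ideal.subset_span (Set.mem_range_self i)
  simpa [Ideal.Quotient.mk_eq_mk_iff_sub_mem] using hi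

theorem aeval_sumElim_X_rename_inl (p : MvPolynomial σ R) :
    aeval (Sum.elim X f) (rename Sum.inl p) = p := by
  rw [aeval_rename, Sum.elim_comp_inl, aeval_X_left_apply]

theorem comap_rename_inr_span_graph :
    Ideal.comap (rename Sum.inr)
        (Ideal.span (Set.range fun i => X (Sum.inr i) - rename Sum.inl (f i))) =
      RingHom.ker (aeval f) := by
  ext p
  rw [Ideal.mem_comap, RingHom.mem_ker]
  constructor
  · intro hp
    have hJ : Ideal.span (Set.range fun i => X (Sum.inr i) - rename Sum.inl (f i)) ≤
        RingHom.ker (aeval (Sum.elim X f)) := by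
      rw [Ideal.span_le]
      rintro _ ⟨i, rfl⟩
      rw [SetLike.mem_coe, RingHom.mem_ker, map_sub, aeval_sumElim_X_rename_inl, aeval_X,
        Sum.elim_inr, sub_self]
    have := hJ hp
    rwa [RingHom.mem_ker, aeval_rename, Sum.elim_comp_inr] at this
  · intro hp
    have := rename_inr_sub_rename_inl_aeval_mem_span f p
    rwa [hp, map_zero, sub_zero] at this

end Graph

section Laurent

variable (R σ : Type*) [CommSemiring R]

def expToInt : (σ →₀ ℕ) →+ (σ → ℤ) where
  toFun u j := u j
  map_zero' := by ext; simp
  map_add' u v := by ext; simp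

theorem expToInt_injective : Function.Injective (expToInt σ) :=
  fun _ _ h => Finsupp.ext fun j => Nat.cast_injective (congrFun h j)

noncomputable def toLaurent : MvPolynomial σ R →ₐ[R] AddMonoidAlgebra R (σ → ℤ) :=
  AddMonoidAlgebra.mapDomainAlgHom R R (expToInt σ)

theorem toLaurent_injective : Function.Injective (toLaurent R σ) :=
  AddMonoidAlgebra.mapDomain_injective (expToInt_injective σ)

variable {R σ}

theorem toLaurent_monomial (s : σ →₀ ℕ) (r : R) :
    toLaurent R σ (monomial s r) = AddMonoidAlgebra.single (fun j => (s j : ℤ)) r :=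
  AddMonoidAlgebra.mapDomain_single

theorem toLaurent_prod_X_pow [Fintype σ] (c : σ → ℕ) :
    toLaurent R σ (∏ j, X j ^ c j) = AddMonoidAlgebra.single (fun j => (c j : ℤ)) 1 := by
  rw [prod_X_pow, toLaurent_monomial]
  congr 1
  ext j
  rw [Finsupp.indicator_of_mem (Finset.mem_univ j)]

end Laurent

end MvPolynomial

theorem phi_eq_toLaurent_comp_aeval {d n : ℕ} (A : Matrix (Fin d) (Fin n) ℕ) :
    phi (fun j i => (A j i : ℤ)) = (toLaurent ℚ (Fin d)).comp (aeval fun i => ∏ j, X j ^ A j i) :=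
  algHom_ext fun i => by
    rw [AlgHom.comp_apply, aeval_X, toLaurent_prod_X_pow]
    exact aeval_X _ i

/-- For a matrix `A` with nonnegative integer entries, the toric
ideal `I_A` is the elimination ideal `J ∩ ℚ[x_1,…,x_n]`, where
`J = ⟨ x_i - t^{a_i} : i = 1,…,n ⟩ ⊆ ℚ[t_1,…,t_d,x_1,…,x_n]` and the
intersection is the preimage of `J` under the inclusion
`ℚ[x_1,…,x_n] ↪ ℚ[t_1,…,t_d,x_1,…,x_n]` (renaming along `Sum.inr`). -/
theorem toricIdeal_eq_elimination (d n : ℕ) (A : Matrix (Fin d) (Fin n) ℕ) :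
    Ideal.comap
        (MvPolynomial.rename (Sum.inr : Fin n → Fin d ⊕ Fin n) :
          MvPolynomial (Fin n) ℚ →ₐ[ℚ] MvPolynomial (Fin d ⊕ Fin n) ℚ)
        (Ideal.span { p : MvPolynomial (Fin d ⊕ Fin n) ℚ |
          ∃ i : Fin n, p = X (Sum.inr i) - ∏ j, X (Sum.inl j) ^ A j i }) =
      toricIdeal (fun j i => (A j i : ℤ)) := by
  have hgens : { p : MvPolynomial (Fin d ⊕ Fin n) ℚ |
      ∃ i : Fin n, p = X (Sum.inr i) - ∏ j, X (Sum.inl j) ^ A j i } =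
      Set.range fun i => X (Sum.inr i) - rename Sum.inl (∏ j, X j ^ A j i) := by
    ext p
    simp [eq_comm]
  rw [hgens, comap_rename_inr_span_graph]
  ext p
  unfold toricIdeal
  rw [RingHom.mem_ker, RingHom.mem_ker, phi_eq_toLaurent_comp_aeval,
    AlgHom.comp_apply, map_eq_zero_iff _ (toLaurent_injective ℚ (Fin d))]
end

section
/- Let A be a d×n integer matrix and let k_1,…,k_m ∈ ℤ^n be vectors that generate, as an abelian group, the integer kernel { w ∈ ℤ^n : A·w = 0 }. For w ∈ ℤ^n write w = w⁺ − w⁻ with w⁺, w⁻ ∈ ℕ^n of disjoint support, and let I_K ⊆ ℚ[x_1,…,x_n] be the ideal generated by the binomials x^{k_j⁺} − x^{k_j⁻}, j = 1,…,m. Then the toric ideal I_A equals the saturation of I_K with respect to the product of all variables: I_A = ⋃_{r ≥ 0} ( I_K : (x_1 x_2 ⋯ x_n)^r ), where (I : f^r) = { g : g·f^r ∈ I } is the ideal quotient. -/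
/-!
The saturation `J = I_K : (x₁⋯xₙ)^∞` contains `I_K` and lies in `I_A`, since `I_K ⊆ I_A` and
`φ_A` sends `x₁⋯xₙ` to a unit. Conversely, the vectors `w` whose binomial `x^{w⁺} - x^{w⁻}`
lies in `J` form a subgroup of `ℤⁿ` (monomial factors cancel in `J`), so they include `ker A`.
Since `φ_A` pushes monomials forward along `u ↦ A u`, its kernel is generated by the binomials
`x^u - x^v` with `A u = A v`, and each of them is `x^{min(u,v)}` times the binomial of `u - v`.
-/

open MvPolynomial

namespace Ideal

variable {R : Type*} [CommSemiring R]

def saturation (I : Ideal R) (f : R) : Ideal R where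
  carrier := {g | ∃ r : ℕ, g * f ^ r ∈ I}
  zero_mem' := ⟨0, by simp⟩
  add_mem' := by
    rintro g h ⟨r, hr⟩ ⟨s, hs⟩
    refine ⟨r + s, ?_⟩
    have : (g + h) * f ^ (r + s) = g * f ^ r * f ^ s + h * f ^ s * f ^ r := by ring
    rw [this]
    exact add_mem (I.mul_mem_right _ hr) (I.mul_mem_right _ hs)
  smul_mem' := by
    rintro c g ⟨r, hr⟩
    exact ⟨r, by rw [smul_eq_mul, mul_assoc]; exact I.mul_mem_left c hr⟩

variable {I : Ideal R} {f g : R}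

theorem mem_saturation : g ∈ I.saturation f ↔ ∃ r : ℕ, g * f ^ r ∈ I := Iff.rfl

theorem coe_saturation : (I.saturation f : Set R) = ⋃ r : ℕ, {g | g * f ^ r ∈ I} := by
  ext g; simp [mem_saturation]

theorem le_saturation : I ≤ I.saturation f :=
  fun g hg => ⟨0, by rwa [pow_zero, mul_one]⟩

theorem mem_saturation_of_mul_mem {c : R} {N : ℕ} (hc : c ∣ f ^ N)
    (h : c * g ∈ I.saturation f) : g ∈ I.saturation f := by
  obtain ⟨r, hr⟩ := h
  obtain ⟨e, he⟩ := hc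
  refine ⟨N + r, ?_⟩
  have : g * f ^ (N + r) = e * (c * g * f ^ r) := by rw [pow_add, he]; ring
  rw [this]
  exact I.mul_mem_left e hr

theorem saturation_le_ker {S F : Type*} [Semiring S] [FunLike F R S] [RingHomClass F R S]
    (ψ : F) (hI : I ≤ RingHom.ker ψ) (hf : IsUnit (ψ f)) : I.saturation f ≤ RingHom.ker ψ := by
  rintro g ⟨r, hr⟩
  have : ψ g * ψ f ^ r = 0 := by rw [← map_pow, ← map_mul]; exact hI hr
  exact (hf.pow r).mul_left_eq_zero.mp this

end Ideal

namespace AddMonoidAlgebra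

variable {R M N : Type*} [Ring R] [AddMonoid M]

/-- With `s = invFun f`, a section of `f` over its image, `x` is congruent modulo `J` to
`mapDomain (s ∘ f) x = mapDomain s (mapDomain f x)`. -/
theorem mem_of_mapDomain_eq_zero {J : Ideal R[M]} (f : M → N)
    (hJ : ∀ m m', f m = f m' → single m (1 : R) - single m' 1 ∈ J) {x : R[M]}
    (hx : mapDomain f x = 0) : x ∈ J := by
  set π := Function.invFun f ∘ f
  have hπ : mapDomain π x = 0 := by
    have : mapDomain π x = mapDomain (Function.invFun f) (mapDomain f x) := by
      ext; simp [π, Finsupp.mapDomain_comp]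
    rw [this, hx, mapDomain_zero]
  have hsub : ∀ y : R[M], y - mapDomain π y ∈ J := by
    intro y
    induction y using induction_linear with
    | zero => simp
    | add x y hx hy => rw [mapDomain_add, add_sub_add_comm]; exact add_mem hx hy
    | single m r =>
      have hm : f m = f (π m) := (Function.invFun_eq ⟨m, rfl⟩).symm
      have : single m r - single (π m) r = single 0 r * (single m 1 - single (π m) 1) := by
        rw [mul_sub, single_mul_single, single_mul_single, zero_add, zero_add, mul_one]
      rw [mapDomain_single, this]
      exact J.mul_mem_left _ (hJ _ _ hm)
  simpa [hπ] using hsub x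

end AddMonoidAlgebra

section Toric

open Matrix

variable {n : ℕ}

theorem monoP_add (u v : Fin n → ℕ) : monoP (u + v) = monoP u * monoP v := by
  simp [monoP, pow_add, Finset.prod_mul_distrib]

theorem monomial_one_eq_monoP (s : Fin n →₀ ℕ) : monomial s (1 : ℚ) = monoP s := by
  rw [← prod_X_pow_eq_monomial, monoP]
  exact Finset.prod_subset (Finset.subset_univ _) fun i _ hi => by
    rw [Finsupp.notMem_support_iff.mp hi, pow_zero]

theorem monoP_dvd_prod_X_pow (u : Fin n → ℕ) : monoP u ∣ (∏ i, X i) ^ (∑ i, u i) := by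
  rw [monoP, ← Finset.prod_pow]
  exact Finset.prod_dvd_prod_of_dvd _ _ fun i _ =>
    pow_dvd_pow _ (Finset.single_le_sum (fun _ _ => Nat.zero_le _) (Finset.mem_univ i))

noncomputable def latticeBinomial (w : Fin n → ℤ) : MvPolynomial (Fin n) ℚ :=
  monoP (fun i => (w i).toNat) - monoP (fun i => (-w i).toNat)

theorem monoP_sub_monoP (a b : Fin n → ℕ) :
    monoP a - monoP b = monoP (a ⊓ b) * latticeBinomial (fun i => a i - b i) := by
  rw [latticeBinomial, mul_sub, ← monoP_add, ← monoP_add]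
  congr 2 <;> funext i <;> simp only [Pi.add_apply, Pi.inf_apply] <;> omega

theorem latticeBinomial_neg (w : Fin n → ℤ) : latticeBinomial (-w) = -latticeBinomial w := by
  simp [latticeBinomial]

def binomialLattice (I : Ideal (MvPolynomial (Fin n) ℚ)) : AddSubgroup (Fin n → ℤ) where
  carrier := {w | latticeBinomial w ∈ I.saturation (∏ i, X i)}
  zero_mem' := by simp [latticeBinomial]
  neg_mem' := by
    intro w (hw : latticeBinomial w ∈ I.saturation (∏ i, X i))
    show latticeBinomial (-w) ∈ I.saturation (∏ i, X i)
    rw [latticeBinomial_neg]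
    exact neg_mem hw
  add_mem' := by
    intro u v hu hv
    -- `x^{u⁺+v⁺} - x^{u⁻+v⁻}` is a combination of the binomials of `u` and `v`, and also a
    -- monomial multiple of the binomial of `u + v`; the saturation cancels that monomial.
    set a := (fun i => (u i).toNat) + fun i => (v i).toNat
    set b := (fun i => (-u i).toNat) + fun i => (-v i).toNat
    have hab : (fun i => (a i : ℤ) - b i) = u + v := by
      funext i; simp only [a, b, Pi.add_apply]; omega
    have hsplit : monoP a - monoP b =
        monoP (fun i => (u i).toNat) * latticeBinomial v
          + monoP (fun i => (-v i).toNat) * latticeBinomial u := by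
      simp only [a, b, monoP_add, latticeBinomial]
      ring
    have hmul : monoP (a ⊓ b) * latticeBinomial (u + v) ∈ I.saturation (∏ i, X i) := by
      rw [← hab, ← monoP_sub_monoP, hsplit]
      exact add_mem (Ideal.mul_mem_left _ _ hv) (Ideal.mul_mem_left _ _ hu)
    exact Ideal.mem_saturation_of_mul_mem (monoP_dvd_prod_X_pow _) hmul

theorem latticeBinomial_mem_saturation_of_mem_span {m : ℕ} {k : Fin m → Fin n → ℤ}
    {w : Fin n → ℤ} (hw : w ∈ Submodule.span ℤ (Set.range k)) :
    latticeBinomial w ∈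
      (Ideal.span {p | ∃ j, p = latticeBinomial (k j)}).saturation (∏ i, X i) := by
  rw [← Submodule.mem_toAddSubgroup, Submodule.span_int_eq_addSubgroupClosure] at hw
  refine (AddSubgroup.closure_le (binomialLattice _)).mpr ?_ hw
  rintro _ ⟨j, rfl⟩
  exact Ideal.le_saturation (Ideal.subset_span ⟨j, rfl⟩)

variable {d : ℕ} (A : Matrix (Fin d) (Fin n) ℤ)

def exponentDegree : (Fin n →₀ ℕ) →+ (Fin d → ℤ) where
  toFun s := A *ᵥ fun i => (s i : ℤ)
  map_zero' := by simp [← Pi.zero_def]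
  map_add' s t := by
    rw [← mulVec_add]
    congr 1

theorem phi_eq_mapDomainAlgHom :
    phi A = AddMonoidAlgebra.mapDomainAlgHom ℚ ℚ (exponentDegree A) := by
  refine MvPolynomial.algHom_ext fun i => ?_
  rw [phi, aeval_X, AddMonoidAlgebra.mapDomainAlgHom_apply,
    show (X i : MvPolynomial (Fin n) ℚ) = AddMonoidAlgebra.single (Finsupp.single i 1) 1 from rfl,
    AddMonoidAlgebra.mapDomain_single]
  congr 1
  funext j
  simp [exponentDegree, mulVec, dotProduct, Finsupp.single_apply]

theorem phi_monoP (a : Fin n → ℕ) :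
    phi A (monoP a) = AddMonoidAlgebra.single (A *ᵥ fun i => (a i : ℤ)) 1 := by
  rw [← Finsupp.coe_equivFunOnFinite_symm a, ← monomial_one_eq_monoP, phi_eq_mapDomainAlgHom,
    AddMonoidAlgebra.mapDomainAlgHom_apply]
  exact AddMonoidAlgebra.mapDomain_single

theorem isUnit_phi_prod_X : IsUnit (phi A (∏ i, X i)) := by
  have : (∏ i, X i : MvPolynomial (Fin n) ℚ) = monoP 1 := by simp [monoP]
  rw [this, phi_monoP]
  exact (Group.isUnit (Multiplicative.ofAdd _)).map (AddMonoidAlgebra.of ℚ _)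

theorem latticeBinomial_mem_toricIdeal {w : Fin n → ℤ} (hw : A *ᵥ w = 0) :
    latticeBinomial w ∈ toricIdeal A := by
  have hsplit : (fun i => ((w i).toNat : ℤ)) = (fun i => ((-w i).toNat : ℤ)) + w := by
    funext i; simp only [Pi.add_apply]; omega
  rw [toricIdeal, RingHom.mem_ker, latticeBinomial, map_sub, phi_monoP, phi_monoP, hsplit,
    mulVec_add, hw, add_zero, sub_self]

variable {m : ℕ} {k : Fin m → Fin n → ℤ}

theorem toricIdeal_le_saturation
    (hk : LinearMap.ker A.mulVecLin ≤ Submodule.span ℤ (Set.range k)) :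
    toricIdeal A ≤ (Ideal.span {p | ∃ j, p = latticeBinomial (k j)}).saturation (∏ i, X i) := by
  intro g hg
  rw [toricIdeal, RingHom.mem_ker, phi_eq_mapDomainAlgHom] at hg
  refine AddMonoidAlgebra.mem_of_mapDomain_eq_zero (exponentDegree A) (fun u v huv => ?_) hg
  have hker : (fun i => ((u i : ℕ) : ℤ) - v i) ∈ LinearMap.ker A.mulVecLin := by
    rw [LinearMap.mem_ker, mulVecLin_apply,
      show (fun i => ((u i : ℕ) : ℤ) - v i) = (fun i => (u i : ℤ)) - fun i => (v i : ℤ) from rfl,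
      mulVec_sub, sub_eq_zero]
    exact huv
  rw [show AddMonoidAlgebra.single u (1 : ℚ) = monomial u 1 from rfl,
    show AddMonoidAlgebra.single v (1 : ℚ) = monomial v 1 from rfl,
    monomial_one_eq_monoP, monomial_one_eq_monoP, monoP_sub_monoP]
  exact Ideal.mul_mem_left _ _ (latticeBinomial_mem_saturation_of_mem_span (hk hker))

theorem saturation_le_toricIdeal
    (hk : Submodule.span ℤ (Set.range k) ≤ LinearMap.ker A.mulVecLin) :
    (Ideal.span {p | ∃ j, p = latticeBinomial (k j)}).saturation (∏ i, X i) ≤ toricIdeal A := by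
  refine Ideal.saturation_le_ker (phi A) (Ideal.span_le.mpr ?_) (isUnit_phi_prod_X A)
  rintro _ ⟨j, rfl⟩
  exact latticeBinomial_mem_toricIdeal A (hk (Submodule.subset_span ⟨j, rfl⟩))

end Toric

/-- If `k_1,…,k_m ∈ ℤ^n` generate (as an abelian group, i.e. as a
`ℤ`-module) the integer kernel `{ w ∈ ℤ^n : A·w = 0 }`, and `I_K` is the lattice
ideal generated by the binomials `x^{k_j⁺} - x^{k_j⁻}` (where `w = w⁺ - w⁻` with
`w⁺, w⁻ ∈ ℕ^n` of disjoint support), then the toric ideal `I_A` is the saturation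
`⋃_{r ≥ 0} (I_K : (x_1 ⋯ x_n)^r)`, with `(I : f^r) = { g : g·f^r ∈ I }`. -/
theorem toricIdeal_eq_saturation (d n m : ℕ) (A : Matrix (Fin d) (Fin n) ℤ)
    (k : Fin m → Fin n → ℤ)
    (hk : Submodule.span ℤ (Set.range k) = LinearMap.ker A.mulVecLin) :
    (toricIdeal A : Set (MvPolynomial (Fin n) ℚ)) =
      ⋃ r : ℕ, { g : MvPolynomial (Fin n) ℚ |
        g * (∏ i, X i) ^ r ∈
          Ideal.span { p : MvPolynomial (Fin n) ℚ | ∃ j : Fin m,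
            p = monoP (fun i => (k j i).toNat) - monoP (fun i => (-(k j i)).toNat) } } := by
  rw [le_antisymm (toricIdeal_le_saturation A hk.ge) (saturation_le_toricIdeal A hk.le),
    Ideal.coe_saturation]
  rfl
end

section
/- Let A be the 3×5 integer matrix with rows (1,0,0,1,1), (0,−1,0,−1,−2), (−3,1,1,−1,1). Then the toric ideal I_A ⊆ ℚ[z_1,…,z_5] is also generated by just the two binomials z_5 − z_2 z_3 z_4 and z_1 z_2 z_3 − z_4. -/
/-!
Modulo the two binomials, `z₄ ≡ z₁z₂z₃` and `z₅ ≡ z₁z₂²z₃²`, so every polynomial is congruent to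
one in `z₁, z₂, z₃` alone. The first three columns of `A` are linearly independent, so `φ_A` is
injective on `ℚ[z₁, z₂, z₃]`; hence an element of `I_A` is congruent to `0`.
-/

open MvPolynomial

/-- The body-in-fluid matrix: rows `(1,0,0,1,1)`, `(0,-1,0,-1,-2)`, `(-3,1,1,-1,1)`. -/
noncomputable def Afluid : Matrix (Fin 3) (Fin 5) ℤ :=
  !![1, 0, 0, 1, 1; 0, -1, 0, -1, -2; -3, 1, 1, -1, 1]

theorem RingHom.ker_le_of_forall_sub_mem {A B S : Type*} [CommRing A] [Semiring B] [Ring S]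
    {J : Ideal A} {f : A →+* S} (g : B →+* A) (r : A → B) (hJ : J ≤ RingHom.ker f)
    (hfg : Function.Injective (f.comp g)) (hr : ∀ p, p - g (r p) ∈ J) :
    RingHom.ker f ≤ J := by
  intro p hp
  have hgr : f (g (r p)) = 0 := by
    have := hJ (hr p)
    rwa [RingHom.mem_ker, map_sub, RingHom.mem_ker.mp hp, zero_sub, neg_eq_zero] at this
  have hr0 : r p = 0 := hfg (by simp [hgr])
  simpa [hr0] using hr p

theorem MvPolynomial.sub_mem_of_forall_X_sub_mem {σ R : Type*} [CommRing R]
    {J : Ideal (MvPolynomial σ R)} (ψ : MvPolynomial σ R →ₐ[R] MvPolynomial σ R)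
    (hψ : ∀ i, X i - ψ (X i) ∈ J) (p : MvPolynomial σ R) : p - ψ p ∈ J := by
  have : (Ideal.Quotient.mkₐ R J).comp ψ = Ideal.Quotient.mkₐ R J :=
    algHom_ext fun i => (Ideal.Quotient.eq.mpr (hψ i)).symm
  exact Ideal.Quotient.eq.mp (congrArg (· p) this).symm

open scoped Matrix

section phi

variable {d n : ℕ} (A : Matrix (Fin d) (Fin n) ℤ)

theorem phi_X (i : Fin n) : phi A (X i) = AddMonoidAlgebra.single (fun j => A j i) 1 :=
  aeval_X _ _

theorem phi_monomial (m : Fin n →₀ ℕ) (c : ℚ) :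
    phi A (monomial m c) = AddMonoidAlgebra.single (A *ᵥ fun i => (m i : ℤ)) c := by
  rw [phi, aeval_monomial, Finsupp.prod_fintype _ _ fun i => pow_zero _]
  simp only [AddMonoidAlgebra.single_pow, one_pow, AddMonoidAlgebra.prod_single,
    Finset.prod_const_one, AddMonoidAlgebra.coe_algebraMap, Function.comp_apply,
    AddMonoidAlgebra.single_mul_single, zero_add, mul_one]
  congr 1
  ext j
  simp [Matrix.mulVec, dotProduct, Finset.sum_apply, mul_comm]

theorem phi_eq_mapDomain (p : MvPolynomial (Fin n) ℚ) :
    phi A p = AddMonoidAlgebra.mapDomain (fun m : Fin n →₀ ℕ => A *ᵥ fun i => (m i : ℤ)) p := by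
  induction p using MvPolynomial.induction_on' with
  | monomial m c => rw [phi_monomial, ← single_eq_monomial, AddMonoidAlgebra.mapDomain_single]
  | add p q hp hq => rw [map_add, hp, hq, AddMonoidAlgebra.mapDomain_add]

theorem phi_injective (hA : Function.Injective A.mulVec) : Function.Injective (phi A) := by
  have hexp : Function.Injective fun m : Fin n →₀ ℕ => A *ᵥ fun i => (m i : ℤ) :=
    fun m m' h => Finsupp.ext fun i => by exact_mod_cast congrFun (hA h) i
  intro p q h
  rw [phi_eq_mapDomain, phi_eq_mapDomain] at h
  exact AddMonoidAlgebra.mapDomain_injective hexp h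

theorem phi_comp_rename {m : ℕ} (f : Fin m → Fin n) :
    (phi A).comp (rename f) = phi (A.submatrix id f) :=
  algHom_ext fun i => by simp [phi_X]

end phi

abbrev fluidBinomials : Set (MvPolynomial (Fin 5) ℚ) :=
  {X 4 - X 1 * X 2 * X 3, X 0 * X 1 * X 2 - X 3}

theorem span_fluidBinomials_le_toricIdeal : Ideal.span fluidBinomials ≤ toricIdeal Afluid := by
  rw [Ideal.span_le]
  rintro g (rfl | rfl) <;>
  · rw [SetLike.mem_coe, toricIdeal, RingHom.mem_ker, map_sub, sub_eq_zero]
    simp only [map_mul, phi_X, AddMonoidAlgebra.single_mul_single, mul_one]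
    congr 1
    ext j
    fin_cases j <;> rfl

/-- Columns `a₄ = a₁ + a₂ + a₃` and `a₅ = a₁ + 2a₂ + 2a₃` of `Afluid`, so `z₄ ↦ z₁z₂z₃` and
`z₅ ↦ z₁z₂²z₃²` preserve `φ_A`. -/
noncomputable def fluidElim : MvPolynomial (Fin 5) ℚ →ₐ[ℚ] MvPolynomial (Fin 3) ℚ :=
  aeval ![X 0, X 1, X 2, X 0 * X 1 * X 2, X 0 * X 1 ^ 2 * X 2 ^ 2]

theorem X_sub_rename_fluidElim_mem (i : Fin 5) :
    X i - rename ![0, 1, 2] (fluidElim (X i)) ∈ Ideal.span fluidBinomials := by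
  rw [Ideal.mem_span_pair]
  fin_cases i
  · exact ⟨0, 0, by simp [fluidElim]⟩
  · exact ⟨0, 0, by simp [fluidElim]⟩
  · exact ⟨0, 0, by simp [fluidElim]⟩
  · exact ⟨0, -1, by simp [fluidElim]⟩
  · exact ⟨1, -(X 1 * X 2), by simp [fluidElim]; ring⟩

theorem phi_Afluid_comp_rename_injective :
    Function.Injective ((phi Afluid).comp (rename ![(0 : Fin 5), 1, 2])) := by
  rw [phi_comp_rename]
  refine phi_injective _ (Matrix.mulVec_injective_of_det_ne_zero ?_)
  simp [Matrix.det_fin_three, Afluid]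

/-- The toric ideal of the body-in-fluid matrix is also generated
by just the two binomials `z_5 - z_2 z_3 z_4` and `z_1 z_2 z_3 - z_4`. -/
theorem toricIdeal_fluid_two_generators :
    toricIdeal Afluid = Ideal.span
      ({ X 4 - X 1 * X 2 * X 3,
         X 0 * X 1 * X 2 - X 3 } : Set (MvPolynomial (Fin 5) ℚ)) := by
  refine le_antisymm ?_ span_fluidBinomials_le_toricIdeal
  exact RingHom.ker_le_of_forall_sub_mem (rename ![0, 1, 2]).toRingHom fluidElim
    span_fluidBinomials_le_toricIdeal phi_Afluid_comp_rename_injective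
    (sub_mem_of_forall_X_sub_mem ((rename _).comp fluidElim) X_sub_rename_fluidElim_mem)
end

section
/- Let A be the 3×6 integer matrix with rows (1,0,1,1,1,0), (0,1,2,2,3,1), (0,0,−2,−1,−2,−1) (the hydrogen-atom example with variables a = electron mass m_e, b = Bohr radius a_0, c = energy E, d = Planck's constant ħ, e = squared electron charge e², f = speed of light). Then the toric ideal I_A ⊆ ℚ[a,b,c,d,e,f] equals the ideal generated by the seven binomials e − d f, b c − d f, a b e − d², a e² − c d², a b f − d, a f² − c, and a e f − c d. -/
/-!
The columns of `a`, `b`, `f` form a basis of `ℤ³` (determinant `-1`), and the columns of `c`, `d`,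
`e` are `a + 2f`, `a + b + f`, `a + b + 2f`. So `φ_A` factors as the substitution
`c ↦ a f², d ↦ a b f, e ↦ a b f²` followed by the monomial map of `ℚ[a, b, f]` given by that basis,
which is injective; hence `I_A` is the kernel of the substitution. Modulo the binomials `a f² - c`,
`a b f - d` and `e - d f`, every polynomial is congruent to its image under the substitution, read
back in `ℚ[a, b, f] ⊆ ℚ[a, …, f]`; so that kernel is generated by the binomials.
-/

open MvPolynomial

/-- The hydrogen-atom matrix: rows `(1,0,1,1,1,0)`, `(0,1,2,2,3,1)`,
`(0,0,-2,-1,-2,-1)`; variables `a` = electron mass `m_e`, `b` = Bohr radius `a_0`,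
`c` = energy `E`, `d` = Planck's constant `ħ`, `e` = squared electron charge `e²`,
`f` = speed of light. -/
noncomputable def Aquantum : Matrix (Fin 3) (Fin 6) ℤ :=
  !![1, 0, 1, 1, 1, 0; 0, 1, 2, 2, 3, 1; 0, 0, -2, -1, -2, -1]

open Matrix

noncomputable def exponentMap {d n : ℕ} (A : Matrix (Fin d) (Fin n) ℤ) :
    (Fin n →₀ ℕ) →+ (Fin d → ℤ) :=
  AddMonoidHom.mk' (fun u => A *ᵥ fun i => (u i : ℤ)) fun u v => by
    simp only [Finsupp.coe_add, Pi.add_apply, Nat.cast_add, ← mulVec_add]; rfl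

theorem phi_eq_mapDomainAlgHom_s16 {d n : ℕ} (A : Matrix (Fin d) (Fin n) ℤ) :
    phi A = (AddMonoidAlgebra.mapDomainAlgHom ℚ ℚ (exponentMap A) :
      MvPolynomial (Fin n) ℚ →ₐ[ℚ] AddMonoidAlgebra ℚ (Fin d → ℤ)) := by
  refine algHom_ext fun i => ?_
  rw [phi, aeval_X]
  show _ = AddMonoidAlgebra.mapDomain _ (AddMonoidAlgebra.single (Finsupp.single i 1) 1)
  rw [AddMonoidAlgebra.mapDomain_single]
  congr 1
  ext j
  simp [exponentMap, mulVec, dotProduct, Finsupp.single_apply]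

theorem exponentMap_injective_of_det_ne_zero {d : ℕ} {A : Matrix (Fin d) (Fin d) ℤ}
    (hA : A.det ≠ 0) : Function.Injective (exponentMap A) := fun u v h => by
  ext i
  exact_mod_cast congrFun (mulVec_injective_of_det_ne_zero hA h) i

theorem phi_injective_of_det_ne_zero {d : ℕ} {A : Matrix (Fin d) (Fin d) ℤ}
    (hA : A.det ≠ 0) : Function.Injective (phi A) := by
  rw [phi_eq_mapDomainAlgHom_s16]
  exact AddMonoidAlgebra.mapDomain_injective (exponentMap_injective_of_det_ne_zero hA)

theorem MvPolynomial.aeval_sub_mem_of_forall_X {σ R : Type*} [CommRing R]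
    {J : Ideal (MvPolynomial σ R)} (f : σ → MvPolynomial σ R) (hf : ∀ i, f i - X i ∈ J)
    (p : MvPolynomial σ R) : aeval f p - p ∈ J := by
  have hquot : (Ideal.Quotient.mkₐ R J).comp (aeval f) = Ideal.Quotient.mkₐ R J :=
    algHom_ext fun i => by simpa [Ideal.Quotient.eq] using hf i
  exact Ideal.Quotient.eq.mp (DFunLike.congr_fun hquot p)

theorem RingHom.ker_eq_of_sub_mem {A B F G : Type*} [CommRing A] [Semiring B]
    [FunLike F A B] [RingHomClass F A B] [FunLike G B A] [ZeroHomClass G B A]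
    (g : F) (s : G) {J : Ideal A} (hJ : J ≤ RingHom.ker g) (hs : ∀ a, s (g a) - a ∈ J) :
    RingHom.ker g = J := by
  refine le_antisymm (fun a ha => ?_) hJ
  simpa [RingHom.mem_ker.mp ha] using hs a

noncomputable def quantumBasis : Matrix (Fin 3) (Fin 3) ℤ := !![1, 0, 0; 0, 1, 1; 0, 0, -1]

noncomputable def quantumSubst : MvPolynomial (Fin 6) ℚ →ₐ[ℚ] MvPolynomial (Fin 3) ℚ :=
  aeval ![X 0, X 1, X 0 * X 2 ^ 2, X 0 * X 1 * X 2, X 0 * X 1 * X 2 ^ 2, X 2]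

theorem quantumBasis_det : quantumBasis.det = -1 := by
  simp [quantumBasis, det_fin_three]

theorem phi_quantumBasis_comp_quantumSubst :
    (phi quantumBasis).comp quantumSubst = phi Aquantum := by
  refine algHom_ext fun i => ?_
  fin_cases i <;>
  · simp only [phi, quantumSubst, AlgHom.comp_apply, aeval_X, Fin.zero_eta, Fin.mk_one,
      Fin.reduceFinMk, cons_val, cons_val_zero, cons_val_one, map_mul, map_pow,
      AddMonoidAlgebra.single_pow, AddMonoidAlgebra.single_mul_single, one_pow, mul_one]
    congr 1
    decide

theorem toricIdeal_Aquantum_eq_ker_quantumSubst :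
    toricIdeal Aquantum = RingHom.ker quantumSubst := by
  ext p
  rw [toricIdeal, RingHom.mem_ker, RingHom.mem_ker, ← phi_quantumBasis_comp_quantumSubst,
    AlgHom.comp_apply, map_eq_zero_iff _ (phi_injective_of_det_ne_zero (by simp [quantumBasis_det]))]

/-- The toric ideal of the hydrogen-atom matrix is generated by
the seven binomials `e - d f`, `b c - d f`, `a b e - d²`, `a e² - c d²`,
`a b f - d`, `a f² - c` and `a e f - c d`. -/
theorem toricIdeal_quantum :
    toricIdeal Aquantum = Ideal.span
      ({ X 4 - X 3 * X 5,
         X 1 * X 2 - X 3 * X 5,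
         X 0 * X 1 * X 4 - X 3 ^ 2,
         X 0 * X 4 ^ 2 - X 2 * X 3 ^ 2,
         X 0 * X 1 * X 5 - X 3,
         X 0 * X 5 ^ 2 - X 2,
         X 0 * X 4 * X 5 - X 2 * X 3 } : Set (MvPolynomial (Fin 6) ℚ)) := by
  rw [toricIdeal_Aquantum_eq_ker_quantumSubst]
  refine RingHom.ker_eq_of_sub_mem _ (rename ![0, 1, 5]) ?_ fun p => ?_
  · refine Ideal.span_le.mpr fun g hg => ?_
    simp only [Set.mem_insert_iff, Set.mem_singleton_iff] at hg
    rcases hg with rfl | rfl | rfl | rfl | rfl | rfl | rfl <;>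
    · rw [SetLike.mem_coe, RingHom.mem_ker]
      simp only [quantumSubst, map_sub, map_mul, map_pow, aeval_X, Matrix.cons_val]
      ring
  · rw [← AlgHom.comp_apply, quantumSubst, comp_aeval]
    refine aeval_sub_mem_of_forall_X _ (fun i => ?_) p
    fin_cases i <;> simp only [Fin.zero_eta, Fin.mk_one, Fin.reduceFinMk, cons_val, cons_val_zero,
      cons_val_one, rename_X, map_mul, map_pow, sub_self, zero_mem]
    · exact Ideal.subset_span (by simp)
    · exact Ideal.subset_span (by simp)
    · rw [show (X 0 * X 1 * X 5 ^ 2 - X 4 : MvPolynomial (Fin 6) ℚ) =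
          (X 0 * X 1 * X 5 - X 3) * X 5 - (X 4 - X 3 * X 5) by ring]
      exact sub_mem (Ideal.mul_mem_right _ _ (Ideal.subset_span (by simp)))
        (Ideal.subset_span (by simp))
end
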